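/- arXiv:1612.01599 — 6 statements merged into one kernel-verified Lean document; each statement's English description precedes it below -/
import Mathlib

section
/- The map U is multiplicative on squares: for every f in (ZMod 2)[r], U(f^2) = (U(f))^2. -/
open Polynomial

noncomputable section

/-- `F = r(r+1)^5` in `(ZMod 2)[r]`. -/
def Fp : Polynomial (ZMod 2) := X * (X + 1) ^ 5

/-- `G = r^5(r+1)` in `(ZMod 2)[r]`. -/
def Gp : Polynomial (ZMod 2) := X ^ 5 * (X + 1)

/-- The images `v_0, …, v_5` of `1, r, …, r^5` under `U`. -/
def v : ℕ → Polynomial (ZMod 2)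
  | 0 => 1
  | 1 => X
  | 2 => X ^ 2
  | 3 => X ^ 3 + X ^ 2 + X
  | 4 => X ^ 4
  | 5 => X ^ 5 + X ^ 4 + X
  | _ => 0

/-- `U` is the unique `ZMod 2`-linear map with `U (G^k r^i) = F^k v_i` for `0 ≤ i ≤ 5`. -/
def IsU (U : Polynomial (ZMod 2) →ₗ[ZMod 2] Polynomial (ZMod 2)) : Prop :=
  ∀ k i : ℕ, i ≤ 5 → U (Gp ^ k * X ^ i) = Fp ^ k * v i

/-!
Squaring is additive in characteristic 2, so both sides of `U (f ^ 2) = U f ^ 2` are linear in `f`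
and it suffices to compare them on the basis `G ^ k * r ^ i`. Since `U (G ^ n * f) = F ^ n * U f`,
this reduces to `U (r ^ (2 * i)) = v i ^ 2` for `i ≤ 5`, which for `i ≥ 3` follows from
`r ^ (5 + m) = G * (1 + r + ⋯ + r ^ (m - 1)) + r ^ 5`.
-/

namespace Polynomial

variable {R : Type*} [CommRing R]

theorem mul_mem_span_pow_mul_X_pow (g : R[X]) (n : ℕ) {f : R[X]}
    (hf : f ∈ Submodule.span R {q | ∃ k, ∃ i < n, g ^ k * X ^ i = q}) :
    g * f ∈ Submodule.span R {q | ∃ k, ∃ i < n, g ^ k * X ^ i = q} := by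
  induction hf using Submodule.span_induction with
  | mem _ hq =>
    obtain ⟨k, i, hi, rfl⟩ := hq
    exact Submodule.subset_span ⟨k + 1, i, hi, by ring⟩
  | zero => simp
  | add _ _ _ _ hx hy => rw [mul_add]; exact add_mem hx hy
  | smul c _ _ hx => rw [mul_smul_comm]; exact Submodule.smul_mem _ c hx

theorem span_pow_mul_X_pow_eq_top {g : R[X]} (hg : g.Monic) (hdeg : 0 < g.natDegree) :
    Submodule.span R {q | ∃ k, ∃ i < g.natDegree, g ^ k * X ^ i = q} = ⊤ := by
  set S := Submodule.span R {q | ∃ k, ∃ i < g.natDegree, g ^ k * X ^ i = q}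
  have small : ∀ f : R[X], f.natDegree < g.natDegree → f ∈ S := fun f hf => by
    rw [as_sum_range' f _ hf]
    refine Submodule.sum_mem _ fun i hi => ?_
    rw [← smul_X_eq_monomial]
    exact Submodule.smul_mem _ _ (Submodule.subset_span ⟨0, i, Finset.mem_range.mp hi, by simp⟩)
  refine Submodule.eq_top_iff'.mpr fun f => ?_
  induction hn : f.natDegree using Nat.strong_induction_on generalizing f with
  | _ n ih =>
    by_cases hf : n < g.natDegree
    · exact small f (hn ▸ hf)
    rw [← modByMonic_add_div f g]
    refine add_mem (small _ (natDegree_modByMonic_lt f hg ?_)) ?_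
    · rintro rfl; simp at hdeg
    refine mul_mem_span_pow_mul_X_pow g _ (ih _ ?_ _ rfl)
    rw [natDegree_divByMonic f hg]
    omega

end Polynomial

theorem LinearMap.map_pow_char_of_span_eq_top {p : ℕ} {A B : Type*} [CommRing A] [CommRing B]
    [ExpChar A p] [ExpChar B p] [Module (ZMod p) A] [Module (ZMod p) B] (f : A →ₗ[ZMod p] B)
    {s : Set A} (hs : Submodule.span (ZMod p) s = ⊤) (h : ∀ x ∈ s, f (x ^ p) = f x ^ p)
    (x : A) :
    f (x ^ p) = f x ^ p := by
  have : f ∘ₗ (_root_.frobenius A p : A →+ A).toZModLinearMap p =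
      (_root_.frobenius B p : B →+ B).toZModLinearMap p ∘ₗ f :=
    LinearMap.ext_on hs h
  exact LinearMap.congr_fun this x

theorem monic_Gp : Gp.Monic := by
  unfold Gp; monicity!

theorem natDegree_Gp : Gp.natDegree = 6 := by
  unfold Gp; compute_degree!

theorem span_Gp_pow_mul_X_pow_eq_top :
    Submodule.span (ZMod 2) {q | ∃ k, ∃ i < 6, Gp ^ k * X ^ i = q} = ⊤ := by
  simpa only [natDegree_Gp] using
    span_pow_mul_X_pow_eq_top monic_Gp (by rw [natDegree_Gp]; norm_num)

theorem X_pow_five_add (m : ℕ) :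
    (X : (ZMod 2)[X]) ^ (5 + m) = Gp * ∑ j ∈ Finset.range m, X ^ j + X ^ 5 := by
  rw [Gp, mul_assoc, ← CharTwo.sub_eq_add X 1, mul_geom_sum]
  ring

namespace IsU

variable {U : Polynomial (ZMod 2) →ₗ[ZMod 2] Polynomial (ZMod 2)} (hU : IsU U)
include hU

theorem map_X_pow {i : ℕ} (hi : i ≤ 5) : U (X ^ i) = v i := by
  simpa using hU 0 i hi

theorem map_Gp_pow_mul (n : ℕ) (f : Polynomial (ZMod 2)) : U (Gp ^ n * f) = Fp ^ n * U f := by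
  have : U ∘ₗ LinearMap.mulLeft (ZMod 2) (Gp ^ n) =
      LinearMap.mulLeft (ZMod 2) (Fp ^ n) ∘ₗ U := by
    refine LinearMap.ext_on span_Gp_pow_mul_X_pow_eq_top ?_
    rintro _ ⟨k, i, hi, rfl⟩
    simp only [LinearMap.comp_apply, LinearMap.mulLeft_apply, ← mul_assoc, ← pow_add,
      hU _ i (by omega)]
  exact LinearMap.congr_fun this f

theorem map_X_pow_five_add {m : ℕ} (hm : m ≤ 6) :
    U (X ^ (5 + m)) = Fp * ∑ j ∈ Finset.range m, v j + v 5 := by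
  rw [X_pow_five_add, map_add, ← pow_one Gp, hU.map_Gp_pow_mul, map_sum, pow_one,
    hU.map_X_pow le_rfl]
  congr 2
  exact Finset.sum_congr rfl fun j hj => hU.map_X_pow (by simp at hj; omega)

theorem map_X_pow_sq {i : ℕ} (hi : i ≤ 5) : U ((X ^ i) ^ 2) = v i ^ 2 := by
  rw [← pow_mul]
  by_cases hsmall : i ≤ 2
  · rw [hU.map_X_pow (by omega)]
    interval_cases i <;> simp [v, ← pow_mul]
  · rw [show i * 2 = 5 + (2 * i - 5) by omega, hU.map_X_pow_five_add (by omega)]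
    interval_cases i <;> simp [Finset.sum_range_succ, v, Fp] <;> grind

end IsU

theorem U_sq (U : Polynomial (ZMod 2) →ₗ[ZMod 2] Polynomial (ZMod 2)) (hU : IsU U)
    (f : Polynomial (ZMod 2)) : U (f ^ 2) = (U f) ^ 2 := by
  refine U.map_pow_char_of_span_eq_top span_Gp_pow_mul_X_pow_eq_top ?_ f
  rintro _ ⟨k, i, hi, rfl⟩
  rw [mul_pow, ← pow_mul, hU.map_Gp_pow_mul, hU.map_X_pow_sq (by omega), hU k i (by omega),
    mul_pow, pow_mul]

end
end

section
/- The polynomials C_n have the following degrees: (a) if n ≡ 1 or 5 (mod 6), then C_n has degree exactly n−1; (b) if n ≡ 3 or 4 (mod 6), then C_n has degree exactly n−2; (c) if n ≡ 0 or 2 (mod 6), then the coefficient of t^k in C_n vanishes for all k > n−2. -/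
open Polynomial

noncomputable section

/-- The recurrence defining the polynomials `C_n` in `(ZMod 2)[t]`. -/
def IsC (C : ℕ → Polynomial (ZMod 2)) : Prop :=
  C 0 = 0 ∧ C 1 = 1 ∧ C 2 = 1 ∧ C 3 = X ∧ C 4 = X ^ 2 ∧ C 5 = X ^ 4 + X ^ 2 + X ∧
  ∀ n : ℕ, C (n + 6) = C (n + 5) + (X ^ 6 + X ^ 5 + X ^ 2 + X) * C n + X ^ n * (X ^ 2 + X)

/-! Since `t ^ 6 + t ^ 5 + t ^ 2 + t` is monic of degree six, `C (n + 6)` inherits the top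
coefficient of `C n` (shifted up by six) as soon as `C (n + 5)` and `t ^ n (t ^ 2 + t)` have smaller
degree. Along the bound `cDeg n`, which grows by six every six steps, this happens exactly when
`n % 6 ∉ {0, 2}`, and strong induction does the rest. -/

section RecurrenceStep

variable {R : Type*} [Semiring R] {A B : R[X]} {k d : ℕ}

theorem natDegree_recurrence_le (hA : A.natDegree ≤ d + 6) (hB : B.natDegree ≤ d)
    (hk : k + 2 ≤ d + 6) :
    (A + (X ^ 6 + X ^ 5 + X ^ 2 + X) * B + X ^ k * (X ^ 2 + X)).natDegree ≤ d + 6 := by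
  have hf : (X ^ 6 + X ^ 5 + X ^ 2 + X : R[X]).natDegree ≤ 6 := by compute_degree
  have hg : (X ^ k * (X ^ 2 + X) : R[X]).natDegree ≤ k + 2 := by compute_degree
  refine natDegree_add_le_of_degree_le (natDegree_add_le_of_degree_le hA ?_) (hg.trans hk)
  rw [add_comm d]
  exact natDegree_mul_le_of_le hf hB

theorem coeff_recurrence_top (hA : A.natDegree < d + 6) (hB : B.natDegree ≤ d)
    (hk : k + 2 < d + 6) :
    (A + (X ^ 6 + X ^ 5 + X ^ 2 + X) * B + X ^ k * (X ^ 2 + X)).coeff (d + 6) = B.coeff d := by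
  have hf : (X ^ 6 + X ^ 5 + X ^ 2 + X : R[X]).natDegree ≤ 6 := by compute_degree
  have hg : (X ^ k * (X ^ 2 + X) : R[X]).natDegree ≤ k + 2 := by compute_degree
  rw [coeff_add, coeff_add, coeff_eq_zero_of_natDegree_lt hA,
    coeff_eq_zero_of_natDegree_lt (hg.trans_lt hk), add_comm d,
    coeff_mul_add_eq_of_natDegree_le hf hB]
  simp [coeff_X_pow, coeff_X]

end RecurrenceStep

def cDeg (n : ℕ) : ℕ := if n % 6 = 1 ∨ n % 6 = 5 then n - 1 else n - 2

theorem cDeg_add_six {n : ℕ} (hn : n ≠ 0) : cDeg (n + 6) = cDeg n + 6 := by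
  unfold cDeg; split_ifs <;> omega

theorem cDeg_le (n : ℕ) : cDeg n ≤ n - 1 := by
  unfold cDeg; split_ifs <;> omega

theorem sub_two_le_cDeg (n : ℕ) : n - 2 ≤ cDeg n := by
  unfold cDeg; split_ifs <;> omega

theorem cDeg_lt_cDeg_succ {n : ℕ} (hn : n ≠ 0) (h0 : (n + 1) % 6 ≠ 0) (h2 : (n + 1) % 6 ≠ 2) :
    cDeg n < cDeg (n + 1) := by
  unfold cDeg; split_ifs <;> omega

namespace IsC

variable {C : ℕ → (ZMod 2)[X]}

theorem natDegree_le_cDeg (hC : IsC C) (n : ℕ) : (C n).natDegree ≤ cDeg n := by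
  obtain ⟨h0, h1, h2, h3, h4, h5, hrec⟩ := hC
  induction n using Nat.strong_induction_on with
  | _ n ih =>
  rcases Nat.lt_or_ge n 7 with hn | hn
  · interval_cases n
    · simp [h0]
    · simp [h1]
    · simp [h2]
    · simp [h3, cDeg]
    · simp [h4, cDeg]
    · rw [h5]; compute_degree!
    · rw [hrec 0, h5, h0, mul_zero, add_zero, pow_zero, one_mul]
      simp only [cDeg]; compute_degree!
  · obtain ⟨m, rfl⟩ : ∃ m, n = m + 1 + 6 := ⟨n - 7, by omega⟩
    have hsix := cDeg_add_six (n := m + 1) (by omega)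
    have hlo := sub_two_le_cDeg (m + 1 + 6)
    have hup := cDeg_le (m + 1 + 5)
    rw [hrec, hsix]
    exact natDegree_recurrence_le ((ih _ (by omega)).trans (by omega)) (ih _ (by omega))
      (by omega)

theorem coeff_cDeg (hC : IsC C) {n : ℕ} (hn0 : n % 6 ≠ 0) (hn2 : n % 6 ≠ 2) :
    (C n).coeff (cDeg n) = 1 := by
  have hdeg := hC.natDegree_le_cDeg
  obtain ⟨h0, h1, h2, h3, h4, h5, hrec⟩ := hC
  induction n using Nat.strong_induction_on with
  | _ n ih =>
  rcases Nat.lt_or_ge n 7 with hn | hn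
  · interval_cases n <;> simp_all [cDeg, coeff_X_pow, coeff_X]
  · obtain ⟨m, rfl⟩ : ∃ m, n = m + 1 + 6 := ⟨n - 7, by omega⟩
    have hsix := cDeg_add_six (n := m + 1) (by omega)
    have hlo := sub_two_le_cDeg (m + 1)
    have hstep : cDeg (m + 1 + 5) < cDeg (m + 1 + 6) :=
      cDeg_lt_cDeg_succ (by omega) (by omega) (by omega)
    rw [hrec, hsix, coeff_recurrence_top ((hdeg _).trans_lt (by omega)) (hdeg _) (by omega)]
    exact ih _ (by omega) (by omega) (by omega)

theorem degree_eq_cDeg (hC : IsC C) {n : ℕ} (h0 : n % 6 ≠ 0) (h2 : n % 6 ≠ 2) :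
    (C n).degree = cDeg n :=
  degree_eq_of_le_of_coeff_ne_zero (natDegree_le_iff_degree_le.mp (hC.natDegree_le_cDeg n))
    (by rw [hC.coeff_cDeg h0 h2]; exact one_ne_zero)

end IsC

theorem C_degrees (C : ℕ → Polynomial (ZMod 2)) (hC : IsC C) (n : ℕ) :
    ((n % 6 = 1 ∨ n % 6 = 5) → (C n).degree = ((n - 1 : ℕ) : WithBot ℕ)) ∧
    ((n % 6 = 3 ∨ n % 6 = 4) → (C n).degree = ((n - 2 : ℕ) : WithBot ℕ)) ∧
    ((n % 6 = 0 ∨ n % 6 = 2) → ∀ k : ℕ, n - 2 < k → (C n).coeff k = 0) := by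
  refine ⟨fun h => ?_, fun h => ?_, fun h k hk => ?_⟩
  · rw [hC.degree_eq_cDeg (by omega) (by omega), cDeg, if_pos h]
  · rw [hC.degree_eq_cDeg (by omega) (by omega), cDeg, if_neg (by omega)]
  · refine coeff_eq_zero_of_natDegree_lt ((hC.natDegree_le_cDeg n).trans_lt ?_)
    rwa [cDeg, if_neg (by omega)]

end
end

section
/- If C_n lies in the Z/2-linear span of the polynomials C_k with k < n, then n ≡ 0 or 2 (mod 6). -/
open Polynomial

noncomputable section

/-!
By induction along the recurrence, `deg C_n ≤ degreeBound n`, with equality when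
`n % 6 ∈ {1, 3, 4, 5}`: in that case the term `(t^6 + t^5 + t^2 + t) C_{n-6}` has degree
`degreeBound (n - 6) + 6 = degreeBound n`, while `C_{n-1}` and `t^{n-6} (t^2 + t)` have smaller
degree. For these `n`, `degreeBound n` exceeds `degreeBound k` for every `0 < k < n`, so all the
earlier `C_k` lie in `degreeLT (degreeBound n)` and `C_n` does not.
-/

/- The exact degree of `C_n` when `n % 6 ∈ {1, 3, 4, 5}`, an upper bound for it otherwise. -/
def degreeBound (n : ℕ) : ℕ := if n % 6 = 1 ∨ n % 6 = 5 then n - 1 else n - 2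

lemma degreeBound_mono : Monotone degreeBound := by
  intro a b hab
  unfold degreeBound
  split_ifs <;> omega

lemma degreeBound_lt {k n : ℕ} (hk : 0 < k) (hkn : k < n) (hn : ¬(n % 6 = 0 ∨ n % 6 = 2)) :
    degreeBound k < degreeBound n := by
  unfold degreeBound
  split_ifs <;> omega

lemma degreeBound_add_six {n : ℕ} (hn : 0 < n) : degreeBound (n + 6) = degreeBound n + 6 := by
  unfold degreeBound
  split_ifs <;> omega

lemma degree_X_pow_mul_X_sq_add_X_lt_degreeBound (n : ℕ) :
    (X ^ n * (X ^ 2 + X) : (ZMod 2)[X]).degree < degreeBound (n + 6) := by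
  have : (X ^ n * (X ^ 2 + X) : (ZMod 2)[X]).degree ≤ (n + 2 : ℕ) := by
    compute_degree
    norm_cast
  exact this.trans_lt (by exact_mod_cast (by unfold degreeBound; split_ifs <;> omega))

lemma degree_X_pow_six_add_X_pow_five_add_X_sq_add_X_mul (p : (ZMod 2)[X]) :
    ((X ^ 6 + X ^ 5 + X ^ 2 + X) * p).degree = 6 + p.degree := by
  rw [degree_mul, show (X ^ 6 + X ^ 5 + X ^ 2 + X : (ZMod 2)[X]).degree = 6 by compute_degree!]

namespace IsC

variable {C : ℕ → (ZMod 2)[X]}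

theorem degree_le (hC : IsC C) : ∀ n, (C n).degree ≤ degreeBound n
  | 0 => by simp [hC.1]
  | 1 => by simp [hC.2.1, degreeBound]
  | 2 => by simp [hC.2.2.1, degreeBound]
  | 3 => by simp [hC.2.2.2.1, degreeBound]
  | 4 => by simp [hC.2.2.2.2.1, degreeBound]
  | 5 => by rw [hC.2.2.2.2.2.1]; compute_degree!
  | n + 6 => by
    have hprev : (C (n + 5)).degree ≤ degreeBound (n + 6) :=
      (degree_le hC (n + 5)).trans (by exact_mod_cast degreeBound_mono (by omega))
    have hmul : ((X ^ 6 + X ^ 5 + X ^ 2 + X) * C n).degree ≤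
        (degreeBound (n + 6) : WithBot ℕ) := by
      rcases n.eq_zero_or_pos with rfl | hn
      · simp [hC.1]
      · rw [degree_X_pow_six_add_X_pow_five_add_X_sq_add_X_mul, degreeBound_add_six hn,
          Nat.cast_add, add_comm]
        exact add_le_add (degree_le hC n) (by norm_num)
    rw [hC.2.2.2.2.2.2 n]
    exact degree_add_le_of_degree_le (degree_add_le_of_degree_le hprev hmul)
      (degree_X_pow_mul_X_sq_add_X_lt_degreeBound n).le

theorem degree_eq (hC : IsC C) :
    ∀ n, ¬(n % 6 = 0 ∨ n % 6 = 2) → (C n).degree = degreeBound n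
  | 0, hn => absurd (Or.inl rfl) hn
  | 1, _ => by simp [hC.2.1, degreeBound]
  | 2, hn => absurd (Or.inr rfl) hn
  | 3, _ => by simp [hC.2.2.2.1, degreeBound]
  | 4, _ => by simp [hC.2.2.2.2.1, degreeBound]
  | 5, _ => by rw [hC.2.2.2.2.2.1]; compute_degree!
  | n + 6, hn => by
    have hprev : (C (n + 5)).degree < degreeBound (n + 6) :=
      (degree_le hC (n + 5)).trans_lt (by exact_mod_cast degreeBound_lt (by omega) (by omega) hn)
    have hmul : ((X ^ 6 + X ^ 5 + X ^ 2 + X) * C n).degree =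
        (degreeBound (n + 6) : WithBot ℕ) := by
      rw [degree_X_pow_six_add_X_pow_five_add_X_sq_add_X_mul, degree_eq hC n (by omega),
        degreeBound_add_six (by omega), Nat.cast_add, add_comm]
      rfl
    have hsum : (C (n + 5) + (X ^ 6 + X ^ 5 + X ^ 2 + X) * C n).degree =
        (degreeBound (n + 6) : WithBot ℕ) := by
      rwa [degree_add_eq_right_of_degree_lt (by rwa [hmul])]
    rw [hC.2.2.2.2.2.2 n, degree_add_eq_left_of_degree_lt
      (hsum ▸ degree_X_pow_mul_X_sq_add_X_lt_degreeBound n), hsum]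

theorem span_le_degreeLT (hC : IsC C) {n : ℕ} (hn : ¬(n % 6 = 0 ∨ n % 6 = 2)) :
    Submodule.span (ZMod 2) {p | ∃ k < n, p = C k} ≤ degreeLT (ZMod 2) (degreeBound n) := by
  rw [Submodule.span_le]
  rintro _ ⟨k, hkn, rfl⟩
  rcases k.eq_zero_or_pos with rfl | hk
  · rw [hC.1]
    exact zero_mem _
  · exact mem_degreeLT.2 <|
      (degree_le hC k).trans_lt (by exact_mod_cast degreeBound_lt hk hkn hn)

end IsC

theorem C_span_converse (C : ℕ → Polynomial (ZMod 2)) (hC : IsC C) (n : ℕ)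
    (h : C n ∈ Submodule.span (ZMod 2) {p : Polynomial (ZMod 2) | ∃ k < n, p = C k}) :
    n % 6 = 0 ∨ n % 6 = 2 := by
  by_contra hn
  have hlt := mem_degreeLT.1 (hC.span_le_degreeLT hn h)
  rw [hC.degree_eq n hn] at hlt
  exact lt_irrefl _ hlt

end
end

section
/- U(F^i) = G^i for i = 0, 1, 2, 3, 4, and U(F^5) = G^5 + F. -/
/-!
Since `U (G^k r^j) = F^k v_j`, `U` acts on a polynomial written in base `G` with digits of degree
at most `5` by replacing `G` with `F` and each `r^j` with `v_j`. So it suffices to expand `F^i`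
(`i ≤ 5`) in base `G` and evaluate the resulting sums; both are finite identities in `𝔽₂[r]`,
checked by normalising and reducing the coefficients mod 2.
-/

open Polynomial

noncomputable section

section Digits

variable {A B : Type*} [Semiring A] [Semiring B]

/-- A digit `d : List ℕ` stands for `∑_{j ∈ d} w j`, so `ofDigits b w [d₀, d₁, …] = ∑ₖ bᵏ dₖ`. -/
def ofDigits (b : A) (w : ℕ → A) : List (List ℕ) → A
  | [] => 0
  | d :: ds => (d.map w).sum + b * ofDigits b w ds

variable {𝓕 : Type*} [FunLike 𝓕 A B] [AddMonoidHomClass 𝓕 A B]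

theorem map_pow_mul_ofDigits (U : 𝓕) {b : A} {c : B} {w : ℕ → A} {w' : ℕ → B} {P : ℕ → Prop}
    (hU : ∀ k j, P j → U (b ^ k * w j) = c ^ k * w' j) :
    ∀ (ds : List (List ℕ)) (k : ℕ), (∀ d ∈ ds, ∀ j ∈ d, P j) →
      U (b ^ k * ofDigits b w ds) = c ^ k * ofDigits c w' ds
  | [], _, _ => by simp [ofDigits]
  | d :: ds, k, hds => by
    have hd : U (b ^ k * (d.map w).sum) = c ^ k * (d.map w').sum := by
      rw [← List.sum_map_mul_left, ← List.sum_map_mul_left, map_list_sum, List.map_map]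
      exact congrArg List.sum (List.map_congr_left fun j hj => hU k j (hds d (by simp) j hj))
    have hrest := map_pow_mul_ofDigits U hU ds (k + 1) fun d' hd' => hds d' (by simp [hd'])
    simp only [ofDigits, mul_add, map_add, hd, ← mul_assoc, ← pow_succ] at hrest ⊢
    rw [hrest]

theorem map_ofDigits (U : 𝓕) {b : A} {c : B} {w : ℕ → A} {w' : ℕ → B} {P : ℕ → Prop}
    (hU : ∀ k j, P j → U (b ^ k * w j) = c ^ k * w' j) (ds : List (List ℕ))
    (hds : ∀ d ∈ ds, ∀ j ∈ d, P j) : U (ofDigits b w ds) = ofDigits c w' ds := by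
  simpa using map_pow_mul_ofDigits U hU ds 0 hds

end Digits

/-- The base-`G` digits of `F ^ i` for `i ≤ 5`. -/
def digitsFpPow : ℕ → List (List ℕ)
  | 0 => [[0]]
  | 1 => [[1, 2], [0]]
  | 2 => [[2, 4], [], [0]]
  | 3 => [[3, 4], [0, 2, 4], [1, 2], [0]]
  | 4 => [[4, 5], [0, 1, 2], [], [], [0]]
  | 5 => [[], [0, 5], [0, 1, 2], [], [1, 2], [0]]
  | _ => []

theorem digitsFpPow_le_five (i : ℕ) : ∀ d ∈ digitsFpPow i, ∀ j ∈ d, j ≤ 5 := by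
  unfold digitsFpPow; split <;> decide

theorem Fp_pow_eq_ofDigits {i : ℕ} (hi : i ≤ 5) :
    Fp ^ i = ofDigits Gp (X ^ ·) (digitsFpPow i) := by
  interval_cases i <;>
    simp only [digitsFpPow, ofDigits, List.map_cons, List.map_nil, List.sum_cons, List.sum_nil,
      Fp, Gp] <;> ring_nf <;> reduce_mod_char

theorem ofDigits_digitsFpPow {i : ℕ} (hi : i ≤ 4) : ofDigits Fp v (digitsFpPow i) = Gp ^ i := by
  interval_cases i <;>
    simp only [digitsFpPow, ofDigits, List.map_cons, List.map_nil, List.sum_cons, List.sum_nil,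
      Fp, Gp, v] <;> ring_nf <;> reduce_mod_char

theorem ofDigits_digitsFpPow_five : ofDigits Fp v (digitsFpPow 5) = Gp ^ 5 + Fp := by
  simp only [digitsFpPow, ofDigits, List.map_cons, List.map_nil, List.sum_cons, List.sum_nil,
    Fp, Gp, v]
  ring_nf; reduce_mod_char

theorem U_powers_of_F (U : Polynomial (ZMod 2) →ₗ[ZMod 2] Polynomial (ZMod 2)) (hU : IsU U) :
    (∀ i : ℕ, i ≤ 4 → U (Fp ^ i) = Gp ^ i) ∧ U (Fp ^ 5) = Gp ^ 5 + Fp := by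
  have hU_Fp_pow (i : ℕ) (hi : i ≤ 5) : U (Fp ^ i) = ofDigits Fp v (digitsFpPow i) := by
    rw [Fp_pow_eq_ofDigits hi]
    exact map_ofDigits U hU _ (digitsFpPow_le_five i)
  refine ⟨fun i hi => ?_, ?_⟩
  · rw [hU_Fp_pow i (by omega), ofDigits_digitsFpPow hi]
  · rw [hU_Fp_pow 5 le_rfl, ofDigits_digitsFpPow_five]

end
end

section
/- Let u_0 = F+G, u_1 = (F+G)^3+G, u_2 = G, u_4 = (F+G)^2·G, u_5 = (F+G)^4·G + (F+G)·F·G in (ZMod 2)[r]. Then u_0, u_1, u_2, u_4, u_5 are linearly independent over the subring Z/2[G], and for each i ∈ {0,1,2,4,5} there is a polynomial g_i ∈ (ZMod 2)[t] of degree exactly i with u_i = (r^2+r)·g_i(r^2). -/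
/-!
In characteristic 2, `F + G = r² + r` and `G = r⁴ (r² + r)`, so every `u i` is `r² + r` times a
polynomial in `r²`. For the independence compare `r`-adic orders: `G` has order `5`, so every
nonzero element of `(ZMod 2)[G]` has order divisible by `5`. Replacing `u 4` by `u 4 + u 5`
gives generators of orders `1, 3, 5, 9, 7`, pairwise distinct mod `5`; hence the nonzero terms of
a vanishing combination have pairwise distinct orders, and the one of least order cannot cancel.
-/

open Polynomial

noncomputable section

/-- The elements `u_0, u_1, u_2, u_4, u_5` (with `u i = 0` for other `i`). -/
def u : ℕ → Polynomial (ZMod 2)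
  | 0 => Fp + Gp
  | 1 => (Fp + Gp) ^ 3 + Gp
  | 2 => Gp
  | 4 => (Fp + Gp) ^ 2 * Gp
  | 5 => (Fp + Gp) ^ 4 * Gp + (Fp + Gp) * Fp * Gp
  | _ => 0

namespace Polynomial

variable {R : Type*}

section Semiring

variable [Semiring R]

theorem natTrailingDegree_X_pow_mul {p : R[X]} (hp : p.coeff 0 ≠ 0) (n : ℕ) :
    (X ^ n * p).natTrailingDegree = n := by
  rw [X_pow_mul, natTrailingDegree_mul_X_pow (by rintro rfl; exact hp (coeff_zero 0)),
    natTrailingDegree_eq_zero.2 (Or.inr hp), zero_add]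

theorem natTrailingDegree_pow [NoZeroDivisors R] (p : R[X]) (n : ℕ) :
    (p ^ n).natTrailingDegree = n * p.natTrailingDegree := by
  rcases eq_or_ne p 0 with rfl | hp
  · cases n <;> simp
  induction n with
  | zero => simp
  | succ n ih => rw [pow_succ, natTrailingDegree_mul (pow_ne_zero n hp) hp, ih, add_one_mul]

theorem eq_zero_of_sum_eq_zero_of_injOn_natTrailingDegree {ι : Type*} {s : Finset ι}
    {f : ι → R[X]}
    (hf : Set.InjOn (fun i => (f i).natTrailingDegree) {i | i ∈ s ∧ f i ≠ 0})
    (h : ∑ i ∈ s, f i = 0) : ∀ i ∈ s, f i = 0 := by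
  classical
  by_contra! hne
  obtain ⟨i₀, hi₀, hmin⟩ :=
    (s.filter (f · ≠ 0)).exists_min_image (fun i => (f i).natTrailingDegree)
      (by simpa [Finset.filter_nonempty_iff] using hne)
  rw [Finset.mem_filter] at hi₀
  have hcoeff : (∑ i ∈ s, f i).coeff (f i₀).natTrailingDegree = (f i₀).trailingCoeff := by
    rw [finsetSum_coeff, Finset.sum_eq_single_of_mem i₀ hi₀.1]
    · rfl
    intro j hj hji
    rcases eq_or_ne (f j) 0 with hfj | hfj
    · rw [hfj, coeff_zero]
    refine coeff_eq_zero_of_lt_natTrailingDegree (lt_of_le_of_ne (hmin j ?_) fun heq => ?_)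
    · exact Finset.mem_filter.2 ⟨hj, hfj⟩
    · exact hji (hf ⟨hj, hfj⟩ hi₀ heq.symm)
  rw [h, coeff_zero] at hcoeff
  exact trailingCoeff_nonzero_iff_nonzero.2 hi₀.2 hcoeff.symm

end Semiring

section CommSemiring

variable [CommSemiring R] [NoZeroDivisors R]

theorem natTrailingDegree_comp {p q : R[X]} (hq : q.coeff 0 = 0) :
    (p.comp q).natTrailingDegree = p.natTrailingDegree * q.natTrailingDegree := by
  rcases eq_or_ne p 0 with rfl | hp
  · simp
  rcases eq_or_ne q 0 with rfl | hq0
  · simp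
  set m := p.natTrailingDegree
  obtain ⟨p', hp'⟩ : X ^ m ∣ p :=
    X_pow_dvd_iff.2 fun d hd => coeff_eq_zero_of_lt_natTrailingDegree hd
  have hp'0 : (p'.comp q).coeff 0 ≠ 0 := by
    have hc : p.coeff m = p'.coeff 0 := by rw [hp', coeff_X_pow_mul', if_pos le_rfl, Nat.sub_self]
    rw [coeff_zero_eq_eval_zero, eval_comp, ← coeff_zero_eq_eval_zero, hq,
      ← coeff_zero_eq_eval_zero, ← hc]
    exact trailingCoeff_nonzero_iff_nonzero.2 hp
  rw [hp', mul_comp, X_pow_comp,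
    natTrailingDegree_mul (pow_ne_zero _ hq0) (by rintro h; simp [h] at hp'0),
    natTrailingDegree_pow, natTrailingDegree_eq_zero.2 (Or.inr hp'0), add_zero]

theorem natTrailingDegree_dvd_of_mem_adjoin_singleton {q x : R[X]} (hq : q.coeff 0 = 0)
    (hx : x ∈ Algebra.adjoin R {q}) : q.natTrailingDegree ∣ x.natTrailingDegree := by
  rw [Algebra.adjoin_singleton_eq_range_aeval] at hx
  obtain ⟨p, rfl⟩ := (AlgHom.mem_range _).1 hx
  rw [← comp_eq_aeval, natTrailingDegree_comp hq]
  exact dvd_mul_left _ _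

end CommSemiring

end Polynomial

def g : ℕ → (ZMod 2)[X]
  | 0 => 1
  | 1 => X
  | 2 => X ^ 2
  | 4 => X ^ 4 + X ^ 3
  | 5 => X ^ 5 + X ^ 3
  | _ => 0

theorem u_eq_mul_g_comp : ∀ i, u i = (X ^ 2 + X) * (g i).comp (X ^ 2)
  | 0 | 1 | 2 | 4 | 5 => by
    simp only [u, g, Fp, Gp, one_comp, add_comp, pow_comp, X_comp]
    ring_nf <;> reduce_mod_char
  | 3 | _ + 6 => by simp [u, g]

theorem degree_g {i : ℕ} (hi : i ∈ ({0, 1, 2, 4, 5} : Set ℕ)) : (g i).degree = i := by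
  rcases hi with rfl | rfl | rfl | rfl | rfl <;> simp only [g] <;> compute_degree!

-- `u 0, u 1, u 2, u 5, u 4 + u 5`, each factored as `X ^ (2 i + 1)` times a unit at `0`
def oddOrderBasis (i : Fin 5) : (ZMod 2)[X] :=
  X ^ (2 * (i : ℕ) + 1) * (X + 1) ^ (![1, 1, 1, 5, 3] : Fin 5 → ℕ) i

theorem natTrailingDegree_oddOrderBasis (i : Fin 5) :
    (oddOrderBasis i).natTrailingDegree = 2 * (i : ℕ) + 1 :=
  natTrailingDegree_X_pow_mul (by simp [coeff_X_add_one_pow]) _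

theorem oddOrderBasis_ne_zero (i : Fin 5) : oddOrderBasis i ≠ 0 :=
  fun h => by simpa [h] using natTrailingDegree_oddOrderBasis i

theorem u_eq_oddOrderBasis :
    u 0 = oddOrderBasis 0 ∧ u 1 = oddOrderBasis 1 ∧ u 2 = oddOrderBasis 2 ∧
      u 4 = oddOrderBasis 3 + oddOrderBasis 4 ∧ u 5 = oddOrderBasis 3 := by
  refine ⟨?_, ?_, ?_, ?_, ?_⟩ <;>
    simp only [u, Fp, Gp, oddOrderBasis, Fin.isValue, Fin.coe_ofNat_eq_mod, Nat.reduceMod,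
      Nat.reduceMul, Nat.reduceAdd, Matrix.cons_val_zero, Matrix.cons_val_one, Matrix.cons_val,
      pow_one] <;>
    ring_nf <;> reduce_mod_char

theorem sum_mul_u_eq_sum_mul_oddOrderBasis (a : ℕ → (ZMod 2)[X]) :
    a 0 * u 0 + a 1 * u 1 + a 2 * u 2 + a 4 * u 4 + a 5 * u 5 =
      ∑ i, ![a 0, a 1, a 2, a 4 + a 5, a 4] i * oddOrderBasis i := by
  obtain ⟨h0, h1, h2, h4, h5⟩ := u_eq_oddOrderBasis
  simp only [Fin.sum_univ_five, h0, h1, h2, h4, h5, Fin.isValue, Matrix.cons_val_zero,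
    Matrix.cons_val_one, Matrix.cons_val]
  ring

theorem natTrailingDegree_Gp : Gp.natTrailingDegree = 5 :=
  natTrailingDegree_X_pow_mul (by simp) 5

theorem eq_zero_of_sum_mul_oddOrderBasis_eq_zero {c : Fin 5 → (ZMod 2)[X]}
    (hc : ∀ i, c i ∈ Algebra.adjoin (ZMod 2) {Gp}) (h : ∑ i, c i * oddOrderBasis i = 0)
    (i : Fin 5) : c i = 0 := by
  have hdvd : ∀ i, 5 ∣ (c i).natTrailingDegree := fun i =>
    natTrailingDegree_Gp ▸ natTrailingDegree_dvd_of_mem_adjoin_singleton (by simp [Gp]) (hc i)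
  refine (mul_eq_zero.1 <| eq_zero_of_sum_eq_zero_of_injOn_natTrailingDegree ?_ h i
    (Finset.mem_univ i)).resolve_right (oddOrderBasis_ne_zero i)
  rintro j ⟨-, hj⟩ k ⟨-, hk⟩ hjk
  simp only [natTrailingDegree_mul (left_ne_zero_of_mul hj) (oddOrderBasis_ne_zero j),
    natTrailingDegree_mul (left_ne_zero_of_mul hk) (oddOrderBasis_ne_zero k),
    natTrailingDegree_oddOrderBasis] at hjk
  have hj5 := hdvd j
  have hk5 := hdvd k
  -- `2 j + 1` for `j < 5` runs through all residues mod `5`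
  exact Fin.ext (by omega)

theorem u_indep_and_form :
    (∀ a : ℕ → Polynomial (ZMod 2),
      (∀ i, a i ∈ Algebra.adjoin (ZMod 2) ({Gp} : Set (Polynomial (ZMod 2)))) →
      a 0 * u 0 + a 1 * u 1 + a 2 * u 2 + a 4 * u 4 + a 5 * u 5 = 0 →
      ∀ i ∈ ({0, 1, 2, 4, 5} : Set ℕ), a i = 0) ∧
    (∀ i ∈ ({0, 1, 2, 4, 5} : Set ℕ), ∃ g : Polynomial (ZMod 2),
      g.degree = (i : WithBot ℕ) ∧ u i = (X ^ 2 + X) * g.comp (X ^ 2)) := by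
  refine ⟨fun a ha hsum i hi => ?_, fun i hi => ⟨g i, degree_g hi, u_eq_mul_g_comp i⟩⟩
  have hc := eq_zero_of_sum_mul_oddOrderBasis_eq_zero (c := ![a 0, a 1, a 2, a 4 + a 5, a 4])
    (by simp [Fin.forall_fin_succ, ha, add_mem]) (sum_mul_u_eq_sum_mul_oddOrderBasis a ▸ hsum)
  have h4 : a 4 = 0 := hc 4
  have h5 : a 5 = 0 := by simpa [h4] using hc 3
  rcases hi with rfl | rfl | rfl | rfl | rfl
  exacts [hc 0, hc 1, hc 2, h4, h5]

end
end

section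
/- (a) If n ≡ 0 (mod 12), then the coefficient of t^k in C_n vanishes for all k > n−4. (b) If n ≡ 2 (mod 12), then the coefficient of t^k in C_n + C_{n−1} vanishes for all k > n−4. (c) If n ≡ 8 (mod 24), then the coefficient of t^k in C_n vanishes for all k > n−6. (d) If n ≡ 20 (mod 24), then the coefficient of t^k in C_n + C_{n−2} vanishes for all k > n−6. -/
open Polynomial

noncomputable section

/-!
The coefficients of `C_n` in the top degrees are the low coefficients of the reversed polynomial
`R_n = t^n C_n(1/t)`, which satisfies `R_{n+6} = t R_{n+5} + (1 + t)^5 R_n + t^4 + t^5`.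
Modulo `t^6` this is a recurrence on a finite set, and its solution turns out to be periodic of
period 48. The four claims say that `t^4` or `t^6` divides `R_n`, `R_n + t R_{n-1}` or
`R_n + t^2 R_{n-2}`, which is then a finite check over the residues of `n` modulo 48, done by
computing with the residues modulo `t^6` encoded as bit vectors of length 6.
-/

theorem eq_of_recurrence {α : Type*} {d : ℕ} (F : (Fin d → α) → α) {f g : ℕ → α}
    (hf : ∀ n, f (n + d) = F fun i => f (n + i)) (hg : ∀ n, g (n + d) = F fun i => g (n + i))
    (hinit : ∀ n < d, f n = g n) : f = g := by
  funext n
  induction n using Nat.strong_induction_on with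
  | _ n ih =>
    rcases lt_or_ge n d with hn | hn
    · exact hinit n hn
    · obtain ⟨m, rfl⟩ := Nat.exists_eq_add_of_le' hn
      rw [hf, hg]
      congr 1
      funext i
      exact ih _ (by omega)

namespace Polynomial

variable {R : Type*} [Semiring R]

theorem reflect_add_eq_X_pow_mul {p : R[X]} {N : ℕ} (hp : p.natDegree ≤ N) (i : ℕ) :
    reflect (N + i) p = X ^ i * reflect N p := by
  have h := reflect_mul p 1 hp (by simp : (1 : R[X]).natDegree ≤ i)
  rw [mul_one, reflect_one] at h
  rw [h, X_pow_mul]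

theorem reflect_X (N : ℕ) : reflect N (X : R[X]) = X ^ revAt N 1 := by
  simpa using reflect_monomial (R := R) N 1

theorem coeff_eq_zero_of_X_pow_dvd_reflect {p : R[X]} {N m k : ℕ} (hp : p.natDegree ≤ N)
    (hdvd : X ^ m ∣ reflect N p) (hk : N - m < k) : p.coeff k = 0 := by
  rcases le_or_gt k N with hkN | hkN
  · rw [← revAt_invol (N := N) (i := k), ← coeff_reflect, revAt_le hkN]
    exact X_pow_dvd_iff.mp hdvd _ (by omega)
  · exact coeff_eq_zero_of_natDegree_lt (by omega)

end Polynomial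

def ofBits {w : ℕ} (v : BitVec w) : (ZMod 2)[X] :=
  ∑ j ∈ Finset.range w, if v.getLsbD j then X ^ j else 0

section ofBits

variable {w : ℕ}

theorem coeff_ofBits (v : BitVec w) (d : ℕ) :
    (ofBits v).coeff d = if v.getLsbD d then 1 else 0 := by
  have hterm : ∀ j, ((if v.getLsbD j then (X : (ZMod 2)[X]) ^ j else 0).coeff d) =
      if d = j then (if v.getLsbD d then 1 else 0) else 0 := by
    intro j; split_ifs <;> simp_all [coeff_X_pow]
  simp only [ofBits, finsetSum_coeff, hterm, Finset.sum_ite_eq, Finset.mem_range]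
  by_cases hd : d < w
  · simp [hd]
  · simp [hd, BitVec.getLsbD_of_ge v d (by omega)]

theorem ofBits_xor (a b : BitVec w) : ofBits (a ^^^ b) = ofBits a + ofBits b := by
  ext d
  simp only [coeff_ofBits, coeff_add, BitVec.getLsbD_xor]
  cases a.getLsbD d <;> cases b.getLsbD d <;> decide

theorem X_pow_dvd_ofBits_shiftLeft_sub (a : BitVec w) (i : ℕ) :
    X ^ w ∣ ofBits (a <<< i) - X ^ i * ofBits a := by
  refine X_pow_dvd_iff.mpr fun d hd => ?_
  by_cases hi : i ≤ d
  · simp [coeff_ofBits, coeff_X_pow_mul', hd, hi, BitVec.getLsbD_eq_getElem (by omega : d - i < w)]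
  · simp [coeff_ofBits, coeff_X_pow_mul', hd, hi]

theorem X_pow_dvd_ofBits {v : BitVec w} {m : ℕ} (h : ∀ j < m, v.getLsbD j = false) :
    X ^ m ∣ ofBits v :=
  X_pow_dvd_iff.mpr fun d hd => by simp [coeff_ofBits, h d hd]

end ofBits

def bitsStep (a b : BitVec 6) : BitVec 6 :=
  a <<< 1 ^^^ b ^^^ b <<< 1 ^^^ b <<< 4 ^^^ b <<< 5 ^^^ 0b110000#6

-- the bits of `t^n C_n(1/t)` modulo `t^6`
def lowBits : ℕ → BitVec 6
  | 0 => 0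
  | 1 => 0b10#6
  | 2 => 0b100#6
  | 3 => 0b100#6
  | 4 => 0b100#6
  | 5 => 0b11010#6
  | n + 6 => bitsStep (lowBits (n + 5)) (lowBits n)

theorem lowBits_periodic : Function.Periodic lowBits 48 := by
  have h := eq_of_recurrence (d := 6) (fun v => bitsStep (v 5) (v 0))
    (f := fun n => lowBits (n + 48)) (g := lowBits)
    (fun n => by rw [show n + 6 + 48 = n + 48 + 6 by omega, lowBits]; rfl)
    (fun n => by simp only [lowBits]; rfl) (by decide +kernel)
  exact fun n => congrFun h n

theorem lowBits_sub_eq_lowBits_mod_sub (n : ℕ) {i : ℕ} (hi : i ≤ n % 48) :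
    lowBits (n - i) = lowBits (n % 48 - i) := by
  rw [← lowBits_periodic.map_mod_nat]
  congr 1
  omega

local notation "π" => Ideal.Quotient.mk (Ideal.span {(X : (ZMod 2)[X]) ^ 6})

theorem mk_ofBits_shiftLeft (a : BitVec 6) (i : ℕ) :
    π (ofBits (a <<< i)) = π X ^ i * π (ofBits a) := by
  rw [← map_pow, ← map_mul, Ideal.Quotient.mk_eq_mk_iff_sub_mem, Ideal.mem_span_singleton]
  exact X_pow_dvd_ofBits_shiftLeft_sub a i

theorem mk_ofBits_bitsStep (a b : BitVec 6) :
    π (ofBits (bitsStep a b)) =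
      π X * π (ofBits a) + (1 + π X + π X ^ 4 + π X ^ 5) * π (ofBits b) +
        π X ^ 4 + π X ^ 5 := by
  have h : ofBits (0b110000#6) = X ^ 4 + X ^ 5 := by simp [ofBits, Finset.sum_range_succ]
  simp only [bitsStep, ofBits_xor, map_add, mk_ofBits_shiftLeft, h, map_pow]
  ring

section IsC

variable {C : ℕ → (ZMod 2)[X]}

theorem natDegree_C_le (hC : IsC C) (n : ℕ) : (C n).natDegree ≤ n := by
  obtain ⟨h0, h1, h2, h3, h4, h5, hrec⟩ := hC
  induction n using Nat.strong_induction_on with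
  | _ n ih =>
    match n with
    | 0 => simp [h0]
    | 1 => simp [h1]
    | 2 => simp [h2]
    | 3 => simp [h3]
    | 4 => rw [h4]; compute_degree!
    | 5 => rw [h5]; compute_degree!
    | m + 6 =>
      rw [hrec]
      refine natDegree_add_le_of_degree_le (natDegree_add_le_of_degree_le
        ((ih _ (by omega)).trans (by omega)) ?_) ?_
      · exact (natDegree_mul_le_of_le (by compute_degree!) (ih m (by omega))).trans (by omega)
      · exact (natDegree_mul_le_of_le (natDegree_X_pow_le m) (by compute_degree!)).trans (by omega)

theorem reflect_C_add_six (hC : IsC C) (n : ℕ) :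
    reflect (n + 6) (C (n + 6)) =
      X * reflect (n + 5) (C (n + 5)) + (1 + X + X ^ 4 + X ^ 5) * reflect n (C n) +
        X ^ 4 + X ^ 5 := by
  have hpoly : reflect 6 (X ^ 6 + X ^ 5 + X ^ 2 + X : (ZMod 2)[X]) = 1 + X + X ^ 4 + X ^ 5 := by
    simp [reflect_add, reflect_monomial, reflect_X, revAt_le]
  have hmono : reflect (n + 6) (X ^ n * (X ^ 2 + X) : (ZMod 2)[X]) = X ^ 4 + X ^ 5 := by
    rw [show (X ^ n * (X ^ 2 + X) : (ZMod 2)[X]) = X ^ (n + 2) + X ^ (n + 1) by ring]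
    rw [reflect_add, reflect_monomial, reflect_monomial, revAt_le (by omega), revAt_le (by omega)]
    congr 2 <;> omega
  obtain ⟨-, -, -, -, -, -, hrec⟩ := id hC
  rw [hrec, reflect_add, reflect_add, hmono,
    reflect_add_eq_X_pow_mul (natDegree_C_le hC _) 1, show n + 6 = 6 + n by omega,
    reflect_mul _ _ (by compute_degree!) (natDegree_C_le hC n), hpoly]
  ring

theorem mk_reflect_C_eq_mk_ofBits_lowBits (hC : IsC C) (n : ℕ) :
    π (reflect n (C n)) = π (ofBits (lowBits n)) := by
  have h := eq_of_recurrence (d := 6)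
    (fun v => π X * v 5 + (1 + π X + π X ^ 4 + π X ^ 5) * v 0 + π X ^ 4 + π X ^ 5)
    (f := fun n => π (reflect n (C n))) (g := fun n => π (ofBits (lowBits n)))
    (fun n => by simp only [reflect_C_add_six hC, map_add, map_mul, map_pow, map_one]; rfl)
    (fun n => by simp only [lowBits, mk_ofBits_bitsStep]; rfl) ?_
  · exact congrFun h n
  obtain ⟨h0, h1, h2, h3, h4, h5, -⟩ := hC
  intro n hn
  interval_cases n <;> simp [h0, h1, h2, h3, h4, h5, lowBits, ofBits, Finset.sum_range_succ,
    reflect_add, reflect_monomial, reflect_X, revAt_le]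

theorem X_pow_dvd_of_mk_eq_mk_ofBits {P : (ZMod 2)[X]} {v : BitVec 6} {m : ℕ}
    (hP : π P = π (ofBits v)) (hm : m ≤ 6) (hv : ∀ j < m, v.getLsbD j = false) :
    X ^ m ∣ P := by
  rw [Ideal.Quotient.mk_eq_mk_iff_sub_mem, Ideal.mem_span_singleton] at hP
  have h := dvd_add ((pow_dvd_pow X hm).trans hP) (X_pow_dvd_ofBits hv)
  rwa [sub_add_cancel] at h

theorem X_pow_dvd_reflect_C (hC : IsC C) {n m : ℕ} (hm : m ≤ 6)
    (hv : ∀ j < m, (lowBits n).getLsbD j = false) : X ^ m ∣ reflect n (C n) :=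
  X_pow_dvd_of_mk_eq_mk_ofBits (mk_reflect_C_eq_mk_ofBits_lowBits hC n) hm hv

theorem X_pow_dvd_reflect_C_add (hC : IsC C) {n i m : ℕ} (hi : i ≤ n) (hm : m ≤ 6)
    (hv : ∀ j < m, (lowBits n ^^^ lowBits (n - i) <<< i).getLsbD j = false) :
    X ^ m ∣ reflect n (C n + C (n - i)) := by
  refine X_pow_dvd_of_mk_eq_mk_ofBits ?_ hm hv
  obtain ⟨k, rfl⟩ := Nat.exists_eq_add_of_le' hi
  rw [reflect_add, Nat.add_sub_cancel, reflect_add_eq_X_pow_mul (natDegree_C_le hC k), ofBits_xor,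
    map_add, map_add, map_mul, mk_ofBits_shiftLeft, mk_reflect_C_eq_mk_ofBits_lowBits hC,
    mk_reflect_C_eq_mk_ofBits_lowBits hC, map_pow]

end IsC

theorem lowBits_getLsbD_of_mod_twelve_eq_zero {n : ℕ} (hn : n % 12 = 0) :
    ∀ j < 4, (lowBits n).getLsbD j = false := by
  have key : ∀ r < 48, r % 12 = 0 → ∀ j < 4, (lowBits r).getLsbD j = false := by
    decide +kernel
  rw [← lowBits_periodic.map_mod_nat]
  exact key _ (Nat.mod_lt _ (by norm_num)) (by omega)

theorem lowBits_getLsbD_of_mod_twentyFour_eq_eight {n : ℕ} (hn : n % 24 = 8) :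
    ∀ j < 6, (lowBits n).getLsbD j = false := by
  have key : ∀ r < 48, r % 24 = 8 → ∀ j < 6, (lowBits r).getLsbD j = false := by
    decide +kernel
  rw [← lowBits_periodic.map_mod_nat]
  exact key _ (Nat.mod_lt _ (by norm_num)) (by omega)

theorem lowBits_xor_getLsbD_of_mod_twelve_eq_two {n : ℕ} (hn : n % 12 = 2) :
    ∀ j < 4, (lowBits n ^^^ lowBits (n - 1) <<< 1).getLsbD j = false := by
  have key : ∀ r < 48, r % 12 = 2 →
      ∀ j < 4, (lowBits r ^^^ lowBits (r - 1) <<< 1).getLsbD j = false := by decide +kernel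
  rw [← lowBits_periodic.map_mod_nat n, lowBits_sub_eq_lowBits_mod_sub n (by omega)]
  exact key _ (Nat.mod_lt _ (by norm_num)) (by omega)

theorem lowBits_xor_getLsbD_of_mod_twentyFour_eq_twenty {n : ℕ} (hn : n % 24 = 20) :
    ∀ j < 6, (lowBits n ^^^ lowBits (n - 2) <<< 2).getLsbD j = false := by
  have key : ∀ r < 48, r % 24 = 20 →
      ∀ j < 6, (lowBits r ^^^ lowBits (r - 2) <<< 2).getLsbD j = false := by decide +kernel
  rw [← lowBits_periodic.map_mod_nat n, lowBits_sub_eq_lowBits_mod_sub n (by omega)]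
  exact key _ (Nat.mod_lt _ (by norm_num)) (by omega)

theorem C_coeff_bounds (C : ℕ → Polynomial (ZMod 2)) (hC : IsC C) (n : ℕ) :
    (n % 12 = 0 → ∀ k : ℕ, n - 4 < k → (C n).coeff k = 0) ∧
    (n % 12 = 2 → ∀ k : ℕ, n - 4 < k → (C n + C (n - 1)).coeff k = 0) ∧
    (n % 24 = 8 → ∀ k : ℕ, n - 6 < k → (C n).coeff k = 0) ∧
    (n % 24 = 20 → ∀ k : ℕ, n - 6 < k → (C n + C (n - 2)).coeff k = 0) := by
  have hdeg := natDegree_C_le hC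
  have hdeg_add (i : ℕ) : (C n + C (n - i)).natDegree ≤ n :=
    natDegree_add_le_of_degree_le (hdeg n) ((hdeg _).trans (Nat.sub_le n i))
  refine ⟨fun hn _ hk => ?_, fun hn _ hk => ?_, fun hn _ hk => ?_, fun hn _ hk => ?_⟩
  · exact coeff_eq_zero_of_X_pow_dvd_reflect (hdeg n)
      (X_pow_dvd_reflect_C hC (by norm_num) (lowBits_getLsbD_of_mod_twelve_eq_zero hn)) hk
  · exact coeff_eq_zero_of_X_pow_dvd_reflect (hdeg_add 1)
      (X_pow_dvd_reflect_C_add hC (by omega) (by norm_num)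
        (lowBits_xor_getLsbD_of_mod_twelve_eq_two hn)) hk
  · exact coeff_eq_zero_of_X_pow_dvd_reflect (hdeg n)
      (X_pow_dvd_reflect_C hC le_rfl (lowBits_getLsbD_of_mod_twentyFour_eq_eight hn)) hk
  · exact coeff_eq_zero_of_X_pow_dvd_reflect (hdeg_add 2)
      (X_pow_dvd_reflect_C_add hC (by omega) le_rfl
        (lowBits_xor_getLsbD_of_mod_twentyFour_eq_twenty hn)) hk

end
end
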